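/- Let f : [a,b] → ℝ be of bounded variation and g : [a,b] → ℝ be p-H-Hölder continuous on [a,b] with p ∈ (0,1] and H > 0. Then for all a ≤ u < v ≤ b, |T_a^v(f,g) − T_u^b(f,g)| ≤ (H/(2^p(p+1)))·[((v-a)+(b-u))/2 + |(v-a)/2 − (b-u)/2|]^p · V_a^b f. -/

import Mathlib

open MeasureTheory Set intervalIntegral

/-- The Čebyšev functional on `[α, β]`. -/
noncomputable def cheb (f g : ℝ → ℝ) (α β : ℝ) : ℝ :=
  (β - α)⁻¹ * (∫ t in α..β, f t * g t) -
    ((β - α)⁻¹ * ∫ t in α..β, f t) * ((β - α)⁻¹ * ∫ t in α..β, g t)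

/-- The total variation of `f` on `[a, b]`. -/
noncomputable def totalVar (f : ℝ → ℝ) (a b : ℝ) : ℝ :=
  (eVariationOn f (Icc a b)).toReal

/-- The essential supremum norm of `h` on `[a, b]`. -/
noncomputable def supNorm (h : ℝ → ℝ) (a b : ℝ) : ℝ :=
  (eLpNorm h ⊤ (volume.restrict (Icc a b))).toReal

open Function Filter Topology


/-- Second-mean-value-style lemma for monotone `φ` via its Stieltjes measure. -/
lemma lemM (φ h : ℝ → ℝ) (α β C : ℝ) (hαβ : α ≤ β) (hφ : Monotone φ)
    (hcst : ∀ x, β ≤ x → φ x = φ β)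
    (hh : Continuous h)
    (h0 : (∫ t in α..β, h t) = 0)
    (hC : ∀ t ∈ Icc α β, |∫ s in α..t, h s| ≤ C) :
    |∫ t in α..β, φ t * h t| ≤ (φ β - φ α) * C := by
  set F := hφ.stieltjesFunction with hFdef
  have hFeq : ∀ x, F x = Function.rightLim φ x := hφ.stieltjesFunction_eq
  set μ := F.measure with hμdef
  have hC0 : 0 ≤ C := by
    have h1 := hC α ⟨le_rfl, hαβ⟩
    have h2 : (∫ s in α..α, h s) = 0 := intervalIntegral.integral_same
    rw [h2] at h1; simpa using h1
  have hFmono : Monotone (F : ℝ → ℝ) := F.mono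
  -- φ = F almost everywhere
  have hae : ∀ᵐ x ∂(volume : Measure ℝ), φ x = F x := by
    have hcount : {x | ¬ContinuousAt φ x}.Countable := hφ.countable_not_continuousAt
    have hnull : (volume : Measure ℝ) {x | ¬ContinuousAt φ x} = 0 := hcount.measure_zero _
    rw [ae_iff]
    refine measure_mono_null (fun x hx => ?_) hnull
    simp only [mem_setOf_eq] at hx ⊢
    intro hcont
    apply hx
    rw [hFeq, hφ.continuousWithinAt_Ioi_iff_rightLim_eq.1 hcont.continuousWithinAt]
  have hstep1 : (∫ t in α..β, φ t * h t) = ∫ t in α..β, F t * h t := by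
    rw [intervalIntegral.integral_of_le hαβ, intervalIntegral.integral_of_le hαβ]
    apply MeasureTheory.integral_congr_ae
    filter_upwards [ae_restrict_of_ae hae] with x hx
    rw [hx]
  -- integrability facts
  have hFint : IntervalIntegrable (fun x => F x) volume α β :=
    (hFmono.monotoneOn _).intervalIntegrable
  have hhint : IntervalIntegrable h volume α β := hh.intervalIntegrable α β
  have hFahint : IntervalIntegrable (fun t => (F t - F α) * h t) volume α β :=
    (hFint.sub (_root_.intervalIntegrable_const (a := α) (b := β) (μ := volume) (c := F α))).mul_continuousOn hh.continuousOn
  have hconsthint : IntervalIntegrable (fun t => F α * h t) volume α β :=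
    hhint.const_mul _
  have hsplit : (∫ t in α..β, F t * h t) = ∫ t in α..β, (F t - F α) * h t := by
    have he : (∫ t in α..β, F t * h t)
        = (∫ t in α..β, ((F t - F α) * h t + F α * h t)) := by
      apply intervalIntegral.integral_congr
      intro t _; ring
    rw [he, intervalIntegral.integral_add hFahint hconsthint,
      intervalIntegral.integral_const_mul, h0, mul_zero, add_zero]
  -- measures
  have hμIoc : ∀ t : ℝ, μ (Ioc α t) = ENNReal.ofReal (F t - F α) := fun t => F.measure_Ioc α t
  have hμfin : μ (Ioc α β) ≠ ⊤ := by rw [hμIoc]; exact ENNReal.ofReal_ne_top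
  set ν₁ := (volume : Measure ℝ).restrict (Ioc α β) with hν₁
  set ν₂ := μ.restrict (Ioc α β) with hν₂
  haveI hfin2 : IsFiniteMeasure ν₂ := by
    constructor
    rw [hν₂, Measure.restrict_apply_univ]
    exact hμfin.lt_top
  haveI hfin1 : IsFiniteMeasure ν₁ := by
    constructor
    rw [hν₁, Measure.restrict_apply_univ, Real.volume_Ioc]
    exact ENNReal.ofReal_lt_top
  set k : ℝ → ℝ → ℝ := fun t s => if s ≤ t then h t else 0 with hk
  -- inner integral over s
  have hinner : ∀ t ∈ Icc α β, (∫ s, k t s ∂ν₂) = (F t - F α) * h t := by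
    intro t ht
    have hind : (fun s => k t s) = (Iic t).indicator (fun _ => h t) := by
      ext s; by_cases hs : s ≤ t <;> simp [hk, indicator, hs]
    have hset : Iic t ∩ Ioc α β = Ioc α t := by
      ext s
      simp only [mem_inter_iff, mem_Iic, mem_Ioc]
      constructor
      · rintro ⟨h3, h1, h2⟩; exact ⟨h1, h3⟩
      · rintro ⟨h1, h3⟩; exact ⟨h3, h1, h3.trans ht.2⟩
    rw [hind, MeasureTheory.integral_indicator measurableSet_Iic, hν₂,
      Measure.restrict_restrict measurableSet_Iic, hset, setIntegral_const, measureReal_def, hμIoc,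
      ENNReal.toReal_ofReal (sub_nonneg.2 (hFmono ht.1)), smul_eq_mul]
  have houter1 : (∫ t in α..β, (F t - F α) * h t) = ∫ t, (∫ s, k t s ∂ν₂) ∂ν₁ := by
    rw [intervalIntegral.integral_of_le hαβ]
    exact setIntegral_congr_fun measurableSet_Ioc
      (fun t ht => (hinner t (Ioc_subset_Icc_self ht)).symm)
  -- integrability on the product
  obtain ⟨B, hB⟩ := isCompact_Icc.exists_bound_of_continuousOn (hh.continuousOn (s := Icc α β))
  have hB0 : 0 ≤ B := le_trans (norm_nonneg _) (hB α ⟨le_rfl, hαβ⟩)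
  have hkmeas : StronglyMeasurable (uncurry k) := by
    have hek : uncurry k = {q : ℝ × ℝ | q.2 ≤ q.1}.indicator (fun q => h q.1) := by
      ext q
      by_cases hq : q.2 ≤ q.1 <;> simp [uncurry, hk, indicator, hq]
    rw [hek]
    exact ((hh.comp continuous_fst).stronglyMeasurable).indicator
      (measurableSet_le measurable_snd measurable_fst)
  have hkint : Integrable (uncurry k) (ν₁.prod ν₂) := by
    apply Integrable.mono' (integrable_const B) hkmeas.aestronglyMeasurable
    have hmem : ∀ᵐ q ∂(ν₁.prod ν₂), q ∈ Ioc α β ×ˢ Ioc α β := by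
      rw [hν₁, hν₂, Measure.prod_restrict]
      exact ae_restrict_mem (measurableSet_Ioc.prod measurableSet_Ioc)
    filter_upwards [hmem] with q hq
    rcases hq with ⟨hq1, _⟩
    by_cases hle : q.2 ≤ q.1
    · simpa [uncurry, hk, hle] using hB q.1 (Ioc_subset_Icc_self hq1)
    · simpa [uncurry, hk, hle] using hB0
  have hswap : (∫ t, (∫ s, k t s ∂ν₂) ∂ν₁) = ∫ s, (∫ t, k t s ∂ν₁) ∂ν₂ :=
    integral_integral_swap hkint
  -- inner integral over t
  have hinner2 : ∀ s ∈ Ioc α β, (∫ t, k t s ∂ν₁) = -(∫ r in α..s, h r) := by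
    intro s hs
    have hks : (fun t => k t s) = (Ici s).indicator h := by
      ext t; by_cases hts : s ≤ t <;> simp [hk, indicator, hts]
    have hset : Ici s ∩ Ioc α β = Icc s β := by
      ext t
      simp only [mem_inter_iff, mem_Ici, mem_Ioc, mem_Icc]
      exact ⟨fun ⟨h1, _, h3⟩ => ⟨h1, h3⟩, fun ⟨h1, h3⟩ => ⟨h1, hs.1.trans_le h1, h3⟩⟩
    rw [hks, MeasureTheory.integral_indicator measurableSet_Ici, hν₁,
      Measure.restrict_restrict measurableSet_Ici, hset, integral_Icc_eq_integral_Ioc,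
      ← intervalIntegral.integral_of_le hs.2]
    have hsub := intervalIntegral.integral_interval_sub_left hhint (hh.intervalIntegrable α s)
    rw [← hsub, h0, zero_sub]
  have houter2 : (∫ s, (∫ t, k t s ∂ν₁) ∂ν₂) = ∫ s, -(∫ r in α..s, h r) ∂ν₂ := by
    rw [hν₂]
    exact setIntegral_congr_fun measurableSet_Ioc (fun s hs => hinner2 s hs)
  -- final bound
  have hμtot : (ν₂ univ).toReal = F β - F α := by
    rw [hν₂, Measure.restrict_apply_univ, hμIoc,
      ENNReal.toReal_ofReal (sub_nonneg.2 (hFmono hαβ))]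
  have hfinal : ‖∫ s, -(∫ r in α..s, h r) ∂ν₂‖ ≤ C * (F β - F α) := by
    rw [← hμtot]
    apply MeasureTheory.norm_integral_le_of_norm_le_const
    filter_upwards [ae_restrict_mem measurableSet_Ioc] with s hs
    rw [norm_neg, Real.norm_eq_abs]
    exact hC s ⟨hs.1.le, hs.2⟩
  have hFβ : F β = φ β := by
    rw [hFeq]
    refine le_antisymm ?_ (hφ.le_rightLim le_rfl)
    have h1 := hφ.rightLim_le (lt_add_one β)
    rwa [hcst (β + 1) (by linarith)] at h1
  have hFα : φ α ≤ F α := by rw [hFeq]; exact hφ.le_rightLim le_rfl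
  calc |∫ t in α..β, φ t * h t| = ‖∫ s, -(∫ r in α..s, h r) ∂ν₂‖ := by
        rw [hstep1, hsplit, houter1, hswap, houter2, Real.norm_eq_abs]
    _ ≤ C * (F β - F α) := hfinal
    _ ≤ C * (φ β - φ α) := by
        apply mul_le_mul_of_nonneg_left _ hC0
        linarith [hFβ, hFα]
    _ = (φ β - φ α) * C := mul_comm _ _


set_option maxHeartbeats 1000000 in
lemma cheb_bound (f g : ℝ → ℝ) (a b α β p H : ℝ) (hab : a ≤ b) (haα : a ≤ α) (hαβ : α < β)
    (hβb : β ≤ b) (hp : 0 < p) (hp1 : p ≤ 1) (hH : 0 < H)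
    (hf : BoundedVariationOn f (Icc a b))
    (hg : ∀ x ∈ Icc a b, ∀ y ∈ Icc a b, |g x - g y| ≤ H * |x - y| ^ p) :
    |cheb f g α β| ≤ H * (β - α) ^ p / (2 ^ (p + 1) * (p + 1)) * totalVar f a b := by
  set L := β - α with hLdef
  have hL : 0 < L := sub_pos.2 hαβ
  have hIccsub : Icc α β ⊆ Icc a b := Icc_subset_Icc haα hβb
  -- the clamped version of g
  set cl : ℝ → ℝ := fun x => max a (min b x) with hcl
  have hclmem : ∀ x, cl x ∈ Icc a b := fun x =>
    ⟨le_max_left _ _, max_le hab (min_le_left _ _)⟩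
  have hclid : ∀ x ∈ Icc a b, cl x = x := by
    intro x hx
    simp only [hcl]
    rw [min_eq_right hx.2, max_eq_right hx.1]
  have hcllip : ∀ x y : ℝ, |cl x - cl y| ≤ |x - y| := by
    intro x y
    have h1 : |cl x - cl y| ≤ max |a - a| |min b x - min b y| := abs_max_sub_max_le_max _ _ _ _
    have h2 : |min b x - min b y| ≤ max |b - b| |x - y| := abs_min_sub_min_le_max _ _ _ _
    have e1 : max |a - a| |min b x - min b y| = |min b x - min b y| := by
      rw [sub_self, abs_zero]; exact max_eq_right (abs_nonneg _)
    have e2 : max |b - b| |x - y| = |x - y| := by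
      rw [sub_self, abs_zero]; exact max_eq_right (abs_nonneg _)
    rw [e1] at h1; rw [e2] at h2
    exact h1.trans h2
  set gb : ℝ → ℝ := fun x => g (cl x) with hgb
  have hgbH : ∀ x y : ℝ, |gb x - gb y| ≤ H * |x - y| ^ p := by
    intro x y
    refine (hg _ (hclmem x) _ (hclmem y)).trans ?_
    exact mul_le_mul_of_nonneg_left
      (Real.rpow_le_rpow (abs_nonneg _) (hcllip x y) hp.le) hH.le
  have hgbc : Continuous gb := by
    rw [continuous_iff_continuousAt]
    intro x
    have hb : Tendsto (fun y : ℝ => H * |y - x| ^ p) (𝓝 x) (𝓝 0) := by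
      have c1 : ContinuousAt (fun y : ℝ => |y - x|) x :=
        (continuous_abs.comp (continuous_id.sub continuous_const)).continuousAt
      have hcont : ContinuousAt (fun y : ℝ => H * |y - x| ^ p) x :=
        continuousAt_const.mul (c1.rpow_const (Or.inr hp.le))
      simpa [sub_self, abs_zero, Real.zero_rpow hp.ne'] using hcont.tendsto
    have hsq : Tendsto (fun y => |gb y - gb x|) (𝓝 x) (𝓝 0) :=
      squeeze_zero (fun y => abs_nonneg _) (fun y => hgbH y x) hb
    rw [ContinuousAt, tendsto_iff_dist_tendsto_zero]
    simpa [Real.dist_eq] using hsq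
  have hEg : EqOn g gb (uIcc α β) := by
    intro t ht
    rw [uIcc_of_le hαβ.le] at ht
    simp only [hgb]
    rw [hclid t (hIccsub ht)]
  -- mean of g over [α, β]
  set m : ℝ := L⁻¹ * ∫ t in α..β, gb t with hm
  set h : ℝ → ℝ := fun t => gb t - m with hh
  have hhc : Continuous h := hgbc.sub continuous_const
  have hgbint : ∀ c d : ℝ, IntervalIntegrable gb volume c d := fun c d =>
    hgbc.intervalIntegrable c d
  have h0 : (∫ t in α..β, h t) = 0 := by
    simp only [hh]
    rw [intervalIntegral.integral_sub (hgbint α β) (intervalIntegrable_const (μ := volume)),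
      intervalIntegral.integral_const, smul_eq_mul, hm, ← hLdef]
    field_simp
    ring
  -- the kernel bound
  set C : ℝ := H * L ^ (p + 1) / (2 ^ (p + 1) * (p + 1)) with hC
  have h2p : (0:ℝ) < 2 ^ (p + 1) := Real.rpow_pos_of_pos (by norm_num) _
  have hCbound : ∀ t ∈ Icc α β, |∫ s in α..t, h s| ≤ C := by
    intro t ht
    set x := t - α with hx
    set y := β - t with hy
    have hx0 : 0 ≤ x := sub_nonneg.2 ht.1
    have hy0 : 0 ≤ y := sub_nonneg.2 ht.2
    have hxy : x + y = L := by simp only [hx, hy, hLdef]; ring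
    set A := ∫ s in α..t, (gb s - gb t) with hA
    set Bq := ∫ τ in t..β, (gb τ - gb t) with hBq
    have hI : (∫ s in α..t, gb s) + ∫ s in t..β, gb s = ∫ s in α..β, gb s :=
      intervalIntegral.integral_add_adjacent_intervals (hgbint α t) (hgbint t β)
    have hAe : A = (∫ s in α..t, gb s) - x * gb t := by
      rw [hA, intervalIntegral.integral_sub (hgbint α t)
        intervalIntegrable_const (μ := volume), intervalIntegral.integral_const,
        smul_eq_mul]
    have hBe : Bq = (∫ s in t..β, gb s) - y * gb t := by
      rw [hBq, intervalIntegral.integral_sub (hgbint t β)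
        intervalIntegrable_const (μ := volume), intervalIntegral.integral_const,
        smul_eq_mul]
    have hGe : (∫ s in α..t, h s) = (∫ s in α..t, gb s) - x * m := by
      simp only [hh]
      rw [intervalIntegral.integral_sub (hgbint α t)
        intervalIntegrable_const (μ := volume), intervalIntegral.integral_const,
        smul_eq_mul]
    have hLm : L * m = (∫ s in α..t, gb s) + ∫ s in t..β, gb s := by
      rw [hI, hm]; field_simp
    have hkey : L * (∫ s in α..t, h s) = y * A - x * Bq := by
      rw [hGe, hAe, hBe]
      have hLxy : L = x + y := hxy.symm
      linear_combination (∫ s in α..t, gb s) * hLxy - x * hLm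
    -- bound |A|
    have habs : ∀ u_ : ℝ, ∀ w : ℝ, |gb u_ - gb w| ≤ H * |u_ - w| ^ p := hgbH
    have hintA : IntervalIntegrable (fun s => H * (t - s) ^ p) volume α t := by
      have h1 : IntervalIntegrable (fun u : ℝ => u ^ p) volume 0 (t - α) :=
        intervalIntegrable_rpow' (by linarith)
      have h2 := ((h1.comp_sub_left t).const_mul H).symm
      simpa using h2
    have hAb : |A| ≤ H * x ^ (p + 1) / (p + 1) := by
      have h1 : |A| ≤ ∫ s in α..t, |gb s - gb t| :=
        intervalIntegral.abs_integral_le_integral_abs ht.1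
      have h2 : (∫ s in α..t, |gb s - gb t|) ≤ ∫ s in α..t, H * (t - s) ^ p := by
        apply intervalIntegral.integral_mono_on ht.1
          ((hgbc.sub continuous_const).abs.intervalIntegrable α t) hintA
        intro s hs
        have := hgbH s t
        rwa [abs_sub_comm s t, abs_of_nonneg (sub_nonneg.2 hs.2)] at this
      have h3 : (∫ s in α..t, H * (t - s) ^ p) = H * x ^ (p + 1) / (p + 1) := by
        rw [intervalIntegral.integral_const_mul]
        have h4 : (∫ s in α..t, (t - s) ^ p) = ∫ u in t - t..t - α, u ^ p :=
          intervalIntegral.integral_comp_sub_left (fun u => u ^ p) t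
        rw [h4, sub_self, ← hx, integral_rpow (Or.inl (by linarith)),
          Real.zero_rpow (by linarith : p + 1 ≠ 0)]
        ring
      linarith [h1.trans h2]
    have hintB : IntervalIntegrable (fun τ => H * (τ - t) ^ p) volume t β := by
      have h1 : IntervalIntegrable (fun u : ℝ => u ^ p) volume 0 (β - t) :=
        intervalIntegrable_rpow' (by linarith)
      have h2 := (h1.comp_sub_right t).const_mul H
      simpa using h2
    have hBb : |Bq| ≤ H * y ^ (p + 1) / (p + 1) := by
      have h1 : |Bq| ≤ ∫ τ in t..β, |gb τ - gb t| :=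
        intervalIntegral.abs_integral_le_integral_abs ht.2
      have h2 : (∫ τ in t..β, |gb τ - gb t|) ≤ ∫ τ in t..β, H * (τ - t) ^ p := by
        apply intervalIntegral.integral_mono_on ht.2
          ((hgbc.sub continuous_const).abs.intervalIntegrable t β) hintB
        intro τ hτ
        have := hgbH τ t
        rwa [abs_of_nonneg (sub_nonneg.2 hτ.1)] at this
      have h3 : (∫ τ in t..β, H * (τ - t) ^ p) = H * y ^ (p + 1) / (p + 1) := by
        rw [intervalIntegral.integral_const_mul]
        have h4 : (∫ τ in t..β, (τ - t) ^ p) = ∫ u in t - t..β - t, u ^ p :=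
          intervalIntegral.integral_comp_sub_right (fun u => u ^ p) t
        rw [h4, sub_self, ← hy, integral_rpow (Or.inl (by linarith)),
          Real.zero_rpow (by linarith : p + 1 ≠ 0)]
        ring
      linarith [h1.trans h2]
    -- combine
    have h5 : L * |∫ s in α..t, h s| ≤ y * |A| + x * |Bq| := by
      have h5a : |L * ∫ s in α..t, h s| ≤ y * |A| + x * |Bq| := by
        rw [hkey]
        calc |y * A - x * Bq| ≤ |y * A| + |x * Bq| := abs_sub _ _
          _ = y * |A| + x * |Bq| := by
              rw [abs_mul, abs_mul, abs_of_nonneg hy0, abs_of_nonneg hx0]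
      rwa [abs_mul, abs_of_nonneg hL.le] at h5a
    have hcomb : |∫ s in α..t, h s| ≤ (H / (p+1)) * (x * y * (x ^ p + y ^ p)) / L := by
      rw [le_div_iff₀ hL]
      have hxp : x ^ (p+1) = x ^ p * x := by
        rw [Real.rpow_add' hx0 (by linarith), Real.rpow_one]
      have hyp : y ^ (p+1) = y ^ p * y := by
        rw [Real.rpow_add' hy0 (by linarith), Real.rpow_one]
      have hsum : y * (H * x ^ (p+1) / (p+1)) + x * (H * y ^ (p+1) / (p+1))
          = (H / (p+1)) * (x * y * (x ^ p + y ^ p)) := by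
        rw [hxp, hyp]; field_simp
      have hAB : y * |A| + x * |Bq| ≤ (H / (p+1)) * (x * y * (x ^ p + y ^ p)) := by
        rw [← hsum]
        have := mul_le_mul_of_nonneg_left hAb hy0
        have := mul_le_mul_of_nonneg_left hBb hx0
        linarith
      calc |∫ s in α..t, h s| * L = L * |∫ s in α..t, h s| := mul_comm _ _
        _ ≤ y * |A| + x * |Bq| := h5
        _ ≤ _ := hAB
    -- elementary inequality
    have hxyle : x * y ≤ L * L / 4 := by nlinarith [sq_nonneg (x - y)]
    have hconc : x ^ p + y ^ p ≤ 2 * ((L/2) ^ p) := by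
      have hcc := (Real.concaveOn_rpow hp.le hp1).2 (mem_Ici.2 hx0) (mem_Ici.2 hy0)
        (by norm_num : (0:ℝ) ≤ 1/2) (by norm_num : (0:ℝ) ≤ 1/2) (by norm_num)
      have heq : (1/2 : ℝ) • x + (1/2 : ℝ) • y = L / 2 := by
        simp only [smul_eq_mul]; linarith
      rw [heq] at hcc
      simp only [smul_eq_mul] at hcc
      linarith
    have hpow0 : (0:ℝ) ≤ x ^ p + y ^ p := by positivity
    have hprod : x * y * (x ^ p + y ^ p) ≤ (L * L / 4) * (2 * ((L/2) ^ p)) := by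
      apply mul_le_mul hxyle hconc hpow0
      nlinarith
    have hL2 : (L/2) ^ p = L ^ p / 2 ^ p := Real.div_rpow hL.le (by norm_num : (0:ℝ) ≤ 2) p
    have h2pow : (2:ℝ) ^ (p+1) = 2 ^ p * 2 := by
      rw [Real.rpow_add (by norm_num), Real.rpow_one]
    have hLpow : L ^ (p+1) = L ^ p * L := by
      rw [Real.rpow_add hL, Real.rpow_one]
    have h2p' : (0:ℝ) < 2 ^ p := Real.rpow_pos_of_pos (by norm_num) _
    have hfin : (H / (p+1)) * ((L * L / 4) * (2 * (L ^ p / 2 ^ p))) / L = C := by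
      rw [hC, hLpow, h2pow]
      field_simp
      ring
    calc |∫ s in α..t, h s| ≤ (H / (p+1)) * (x * y * (x ^ p + y ^ p)) / L := hcomb
      _ ≤ (H / (p+1)) * ((L * L / 4) * (2 * ((L/2) ^ p))) / L := by
          have h9 : (H / (p+1)) * (x * y * (x ^ p + y ^ p))
              ≤ (H / (p+1)) * ((L * L / 4) * (2 * ((L/2) ^ p))) :=
            mul_le_mul_of_nonneg_left hprod (by positivity)
          exact (div_le_div_iff_of_pos_right hL).2 h9
      _ = C := by rw [hL2, ← hfin]
  -- Jordan decomposition
  have hlbv : LocallyBoundedVariationOn f (Icc a b) := hf.locallyBoundedVariationOn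
  have hamem : a ∈ Icc a b := ⟨le_rfl, hab⟩
  set vft : ℝ → ℝ := variationOnFromTo f (Icc a b) a with hvft
  have hvmono : MonotoneOn vft (Icc a b) := variationOnFromTo.monotoneOn hlbv hamem
  have hkeyvar : ∀ x ∈ Icc a b, ∀ y ∈ Icc a b, x ≤ y → |f y - f x| ≤ vft y - vft x := by
    intro x hx y hy hxy
    have hdist : |f y - f x| ≤ variationOnFromTo f (Icc a b) x y := by
      rw [variationOnFromTo.eq_of_le f _ hxy, ← Real.dist_eq, dist_edist]
      apply ENNReal.toReal_mono (hlbv x y hx hy)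
      exact eVariationOn.edist_le f ⟨hy, hxy, le_rfl⟩ ⟨hx, le_rfl, hxy⟩
    have hadd := variationOnFromTo.add hlbv hamem hx hy
    simp only [hvft]
    linarith [hdist, hadd]
  set cl2 : ℝ → ℝ := fun z => max α (min β z) with hcl2
  have hcl2mono : Monotone cl2 := fun z w hzw => max_le_max le_rfl (min_le_min le_rfl hzw)
  have hcl2mem : ∀ z, cl2 z ∈ Icc α β := fun z =>
    ⟨le_max_left _ _, max_le hαβ.le (min_le_left _ _)⟩
  have hcl2id : ∀ z ∈ Icc α β, cl2 z = z := by
    intro z hz; simp only [hcl2]; rw [min_eq_right hz.2, max_eq_right hz.1]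
  set P : ℝ → ℝ := fun z => (vft (cl2 z) + f (cl2 z)) / 2 with hP
  set N : ℝ → ℝ := fun z => (vft (cl2 z) - f (cl2 z)) / 2 with hN
  have hPmono : Monotone P := by
    intro z w hzw
    have h1 := hkeyvar _ (hIccsub (hcl2mem z)) _ (hIccsub (hcl2mem w)) (hcl2mono hzw)
    have h2 := abs_le.1 h1
    simp only [hP]
    linarith [h2.1, h2.2]
  have hNmono : Monotone N := by
    intro z w hzw
    have h1 := hkeyvar _ (hIccsub (hcl2mem z)) _ (hIccsub (hcl2mem w)) (hcl2mono hzw)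
    have h2 := abs_le.1 h1
    simp only [hN]
    linarith [h2.1, h2.2]
  have hclα : cl2 α = α := hcl2id α ⟨le_rfl, hαβ.le⟩
  have hclβ : cl2 β = β := hcl2id β ⟨hαβ.le, le_rfl⟩
  have hPcst : ∀ z, β ≤ z → P z = P β := by
    intro z hz
    have hz2 : cl2 z = β := by
      simp only [hcl2]; rw [min_eq_left hz, max_eq_right hαβ.le]
    simp only [hP]; rw [hz2, hclβ]
  have hNcst : ∀ z, β ≤ z → N z = N β := by
    intro z hz
    have hz2 : cl2 z = β := by
      simp only [hcl2]; rw [min_eq_left hz, max_eq_right hαβ.le]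
    simp only [hN]; rw [hz2, hclβ]
  have hlemP := lemM P h α β C hαβ.le hPmono hPcst hhc h0 hCbound
  have hlemN := lemM N h α β C hαβ.le hNmono hNcst hhc h0 hCbound
  have hPint : IntervalIntegrable P volume α β := (hPmono.monotoneOn _).intervalIntegrable
  have hNint : IntervalIntegrable N volume α β := (hNmono.monotoneOn _).intervalIntegrable
  have hfPN : EqOn f (fun t => P t - N t) (uIcc α β) := by
    intro t ht
    rw [uIcc_of_le hαβ.le] at ht
    show f t = (vft (cl2 t) + f (cl2 t)) / 2 - (vft (cl2 t) - f (cl2 t)) / 2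
    rw [hcl2id t ht]; ring
  have hfgEq : EqOn (fun t => f t * g t) (fun t => (P t - N t) * gb t) (uIcc α β) := by
    intro t ht
    show f t * g t = (P t - N t) * gb t
    rw [hfPN ht, hEg ht]
  have hPNint : IntervalIntegrable (fun t => P t - N t) volume α β := hPint.sub hNint
  have hcheb1 : cheb f g α β = L⁻¹ * ∫ t in α..β, (P t - N t) * h t := by
    unfold cheb
    rw [intervalIntegral.integral_congr hfgEq, intervalIntegral.integral_congr hfPN,
      intervalIntegral.integral_congr hEg]
    have hmul : IntervalIntegrable (fun t => (P t - N t) * gb t) volume α β :=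
      hPNint.mul_continuousOn hgbc.continuousOn
    have hsub : (∫ t in α..β, (P t - N t) * h t)
        = (∫ t in α..β, (P t - N t) * gb t) - (∫ t in α..β, (P t - N t)) * m := by
      have he : (fun t => (P t - N t) * h t)
          = fun t => (P t - N t) * gb t - (P t - N t) * m := by
        ext t; simp only [hh]; ring
      rw [he, intervalIntegral.integral_sub hmul (hPNint.mul_const m),
        intervalIntegral.integral_mul_const]
    rw [hsub, hm, ← hLdef]
    ring
  have habs2 : |∫ t in α..β, (P t - N t) * h t| ≤ (vft β - vft α) * C := by
    have hsplit2 : (∫ t in α..β, (P t - N t) * h t)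
        = (∫ t in α..β, P t * h t) - ∫ t in α..β, N t * h t := by
      have he : (fun t => (P t - N t) * h t) = fun t => P t * h t - N t * h t := by
        ext t; ring
      rw [he, intervalIntegral.integral_sub (hPint.mul_continuousOn hhc.continuousOn)
        (hNint.mul_continuousOn hhc.continuousOn)]
    rw [hsplit2]
    have hsum : (P β - P α) * C + (N β - N α) * C = (vft β - vft α) * C := by
      simp only [hP, hN]; rw [hclα, hclβ]; ring
    refine le_trans (abs_sub _ _) ?_
    rw [← hsum]
    exact add_le_add hlemP hlemN
  have hvar : vft β - vft α ≤ totalVar f a b := by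
    have h1 : 0 ≤ vft α := variationOnFromTo.nonneg_of_le f _ haα
    have hβmem : β ∈ Icc a b := ⟨haα.trans hαβ.le, hβb⟩
    have hbmem : b ∈ Icc a b := ⟨hab, le_rfl⟩
    have h2 : vft β ≤ vft b := hvmono hβmem hbmem hβb
    have h3 : vft b = totalVar f a b := by
      simp only [hvft]
      rw [variationOnFromTo.eq_of_le f _ hab]
      unfold totalVar
      rw [inter_self]
    linarith
  have hC0 : 0 ≤ C := by rw [hC]; positivity
  calc |cheb f g α β| = L⁻¹ * |∫ t in α..β, (P t - N t) * h t| := by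
        rw [hcheb1, abs_mul, abs_of_nonneg (inv_nonneg.2 hL.le)]
    _ ≤ L⁻¹ * ((vft β - vft α) * C) :=
        mul_le_mul_of_nonneg_left habs2 (inv_nonneg.2 hL.le)
    _ ≤ L⁻¹ * (totalVar f a b * C) := by
        apply mul_le_mul_of_nonneg_left _ (inv_nonneg.2 hL.le)
        exact mul_le_mul_of_nonneg_right hvar hC0
    _ = H * L ^ p / (2 ^ (p + 1) * (p + 1)) * totalVar f a b := by
        rw [hC]
        have hLpow : L ^ (p+1) = L ^ p * L := by rw [Real.rpow_add hL, Real.rpow_one]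
        have h2p'' : (0:ℝ) < 2 ^ (p+1) := Real.rpow_pos_of_pos (by norm_num) _
        rw [hLpow]
        field_simp

theorem stmt7 (f g : ℝ → ℝ) (a b u v p H : ℝ) (hau : a ≤ u) (huv : u < v) (hvb : v ≤ b)
    (hp : 0 < p) (hp1 : p ≤ 1) (hH : 0 < H)
    (hf : BoundedVariationOn f (Icc a b))
    (hg : ∀ x ∈ Icc a b, ∀ y ∈ Icc a b, |g x - g y| ≤ H * |x - y| ^ p) :
    |cheb f g a v - cheb f g u b| ≤
      (H / (2 ^ p * (p + 1))) *
        (((v - a) + (b - u)) / 2 + |(v - a) / 2 - (b - u) / 2|) ^ p * totalVar f a b := by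
  have hab : a ≤ b := hau.trans (huv.le.trans hvb)
  have hb1 := cheb_bound f g a b a v p H hab le_rfl (lt_of_le_of_lt hau huv) hvb hp hp1 hH hf hg
  have hb2 := cheb_bound f g a b u b p H hab hau (lt_of_lt_of_le huv hvb) le_rfl hp hp1 hH hf hg
  set M := max (v - a) (b - u) with hM
  have hMeq : ((v - a) + (b - u)) / 2 + |(v - a) / 2 - (b - u) / 2| = M := by
    rcases le_total (v - a) (b - u) with hle | hle
    · rw [abs_of_nonpos (by linarith), hM, max_eq_right hle]; ring
    · rw [abs_of_nonneg (by linarith), hM, max_eq_left hle]; ring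
  rw [hMeq]
  have hva0 : 0 ≤ v - a := by linarith
  have hbu0 : 0 ≤ b - u := by linarith
  have hr1 : (v - a) ^ p ≤ M ^ p := Real.rpow_le_rpow hva0 (le_max_left _ _) hp.le
  have hr2 : (b - u) ^ p ≤ M ^ p := Real.rpow_le_rpow hbu0 (le_max_right _ _) hp.le
  have hV0 : 0 ≤ totalVar f a b := ENNReal.toReal_nonneg
  have h2p : (0:ℝ) < 2 ^ p := Real.rpow_pos_of_pos (by norm_num) _
  have h2p1 : (2:ℝ) ^ (p + 1) = 2 ^ p * 2 := by
    rw [Real.rpow_add (by norm_num), Real.rpow_one]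
  have h2pp : (0:ℝ) < 2 ^ (p + 1) := Real.rpow_pos_of_pos (by norm_num) _
  have key : |cheb f g a v - cheb f g u b| ≤ |cheb f g a v| + |cheb f g u b| := abs_sub _ _
  have e1 : H * (v - a) ^ p / (2 ^ (p + 1) * (p + 1)) * totalVar f a b
      ≤ H * M ^ p / (2 ^ (p + 1) * (p + 1)) * totalVar f a b := by
    apply mul_le_mul_of_nonneg_right _ hV0
    apply div_le_div_of_nonneg_right ?_ ?_
    · exact mul_le_mul_of_nonneg_left hr1 hH.le
    · positivity
  have e2 : H * (b - u) ^ p / (2 ^ (p + 1) * (p + 1)) * totalVar f a b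
      ≤ H * M ^ p / (2 ^ (p + 1) * (p + 1)) * totalVar f a b := by
    apply mul_le_mul_of_nonneg_right _ hV0
    apply div_le_div_of_nonneg_right ?_ ?_
    · exact mul_le_mul_of_nonneg_left hr2 hH.le
    · positivity
  have efin : H * M ^ p / (2 ^ (p + 1) * (p + 1)) * totalVar f a b * 2
      = H / (2 ^ p * (p + 1)) * M ^ p * totalVar f a b := by
    rw [h2p1]; field_simp
  linarith [key, hb1, hb2, e1, e2, efin]
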